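/- arXiv:2302.06136 — 4 statements merged into one kernel-verified Lean document; each statement's English description precedes it below -/
import Mathlib

section
/- For τ_min ≥ 1/2, the lower bound β̲(τ_min) = ((3+τ_min) - √((3+τ_min)² - 4(τ_min+1)))/2 satisfies β̲(τ_min) ≥ 1/2. Hence an adversary with β < 1/2 cannot satisfy the Difficulty Altering feasibility condition β > β̲(τ_min) when τ_min ≥ 1/2. -/
/-- For τ_min ≥ 1/2, the Difficulty Altering lower bound is at least 1/2, hence
no adversary with β < 1/2 can satisfy the feasibility condition β > β̲(τ_min). -/
theorem difficulty_altering_defense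
    (τmin : ℝ) (hτ : τmin ≥ 1/2) :
    ((3 + τmin) - Real.sqrt ((3 + τmin) ^ 2 - 4 * (τmin + 1))) / 2 ≥ 1/2 ∧
    ∀ β : ℝ, β < 1/2 →
      ¬ (β > ((3 + τmin) - Real.sqrt ((3 + τmin) ^ 2 - 4 * (τmin + 1))) / 2) := by
  have hnn : (0:ℝ) ≤ 2 + τmin := by linarith
  have hsq : Real.sqrt ((3 + τmin) ^ 2 - 4 * (τmin + 1)) ≤ 2 + τmin := by
    have h1 : (3 + τmin) ^ 2 - 4 * (τmin + 1) ≤ (2 + τmin) ^ 2 := by nlinarith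
    calc Real.sqrt ((3 + τmin) ^ 2 - 4 * (τmin + 1))
        ≤ Real.sqrt ((2 + τmin) ^ 2) := Real.sqrt_le_sqrt h1
      _ = 2 + τmin := Real.sqrt_sq hnn
  have hmain : ((3 + τmin) - Real.sqrt ((3 + τmin) ^ 2 - 4 * (τmin + 1))) / 2 ≥ 1/2 := by
    linarith
  exact ⟨hmain, fun β hβ hgt => by linarith⟩
end

section
/- Under the Quick Fork attack, with payoffs v_par(π') = ((n-1)/n)·(β_par/(β_r+β_a))·(r(k+mϑ) - χ(k+m)) - kβ_par·χ for deviating and v_par(π) = β_par·(r(k+mϑ) - χ(k+m)) for following, where m = kβ_h/(1-2β_h), β_r+β_a = 1-β_h, and η = r/χ: the deviation is strictly profitable (v_par(π') > v_par(π)) whenever ((nβ_h - 1)/(n(1-β_h)))·((η-1)k + (ηϑ-1)m) > k, which after substituting m is equivalent to η > ((1-β_h)/(nβ_h-1))·(n - β_h·n - 1)/(1 - (2-ϑ)β_h) (assuming nβ_h > 1, β_h < 1/2, η > 1, ϑ ∈ (0,1], χ > 0, β_par > 0). -/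
/-- Quick Fork profitability: the deviation payoff exceeds the honest payoff
whenever ((nβ_h-1)/(n(1-β_h)))·((η-1)k + (ηϑ-1)m) > k, and after substituting
m = kβ_h/(1-2β_h), this condition is equivalent to
η > ((1-β_h)/(nβ_h-1))·(n-β_h n-1)/(1-(2-ϑ)β_h). -/
theorem quick_fork_profitability
    (n : ℕ) (βh βr βa βpar r χ ϑ k m η : ℝ)
    (hn : 1 < n) (hnβ : (n : ℝ) * βh > 1)
    (hβh0 : 0 < βh) (hβh : βh < 1/2)
    (hη : 1 < η) (hϑ0 : 0 < ϑ) (hϑ1 : ϑ ≤ 1)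
    (hχ : 0 < χ) (hpar : 0 < βpar) (hk : 0 < k)
    (hm : m = k * βh / (1 - 2 * βh))
    (hsum : βr + βa = 1 - βh)
    (hηdef : η = r / χ) :
    ((((n : ℝ) * βh - 1) / ((n : ℝ) * (1 - βh))) * ((η - 1) * k + (η * ϑ - 1) * m) > k →
      ((n : ℝ) - 1) / (n : ℝ) * (βpar / (βr + βa)) * (r * (k + m * ϑ) - χ * (k + m))
          - k * βpar * χ
        > βpar * (r * (k + m * ϑ) - χ * (k + m))) ∧
    ((((n : ℝ) * βh - 1) / ((n : ℝ) * (1 - βh))) * ((η - 1) * k + (η * ϑ - 1) * m) > k ↔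
      η > ((1 - βh) / ((n : ℝ) * βh - 1)) *
            (((n : ℝ) - βh * (n : ℝ) - 1) / (1 - (2 - ϑ) * βh))) := by
  have hn1 : (1:ℝ) < (n:ℝ) := by exact_mod_cast hn
  have hn0 : (0:ℝ) < (n:ℝ) := by linarith
  have h1βh : (0:ℝ) < 1 - βh := by linarith
  have hB : (0:ℝ) < (n:ℝ) * βh - 1 := by linarith
  have hD : (0:ℝ) < 1 - 2 * βh := by linarith
  have hP : (0:ℝ) < 1 - (2 - ϑ) * βh := by nlinarith
  have hDn : (0:ℝ) < (n:ℝ) * (1 - βh) := by positivity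
  have hr : r = η * χ := by rw [hηdef]; field_simp
  subst hr
  have hMD : m * (1 - 2 * βh) = k * βh := by
    rw [hm]; exact div_mul_cancel₀ _ hD.ne'
  constructor
  · intro h
    rw [gt_iff_lt, div_mul_eq_mul_div, lt_div_iff₀ hDn] at h
    rw [hsum, gt_iff_lt, ← sub_pos]
    have key : ((n:ℝ) - 1) / (n:ℝ) * (βpar / (1 - βh)) * (η * χ * (k + m * ϑ) - χ * (k + m))
        = (((n:ℝ) - 1) * βpar * (η * χ * (k + m * ϑ) - χ * (k + m))) / ((n:ℝ) * (1 - βh)) := by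
      field_simp
    rw [key, sub_sub, sub_pos, lt_div_iff₀ hDn]
    nlinarith [mul_lt_mul_of_pos_left h (mul_pos hpar hχ)]
  · have hEq : (((n:ℝ) * βh - 1) / ((n:ℝ) * (1 - βh))) * ((η - 1) * k + (η * ϑ - 1) * m)
        = k * ((((n:ℝ) * βh - 1) * (η * (1 - (2 - ϑ) * βh) - (1 - βh)))
            / (((n:ℝ) * (1 - βh)) * (1 - 2 * βh))) := by
      rw [hm]; field_simp [hD.ne', show (1:ℝ) - βh * 2 ≠ 0 by linarith]; ring
    rw [hEq, gt_iff_lt, gt_iff_lt, div_mul_div_comm, div_lt_iff₀ (mul_pos hB hP)]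
    have hDnD : (0:ℝ) < ((n:ℝ) * (1 - βh)) * (1 - 2 * βh) := mul_pos hDn hD
    constructor
    · intro h
      have h2 : (1:ℝ) < (((n:ℝ) * βh - 1) * (η * (1 - (2 - ϑ) * βh) - (1 - βh)))
          / (((n:ℝ) * (1 - βh)) * (1 - 2 * βh)) := by
        by_contra hc
        push_neg at hc
        linarith [mul_le_mul_of_nonneg_left hc hk.le]
      rw [lt_div_iff₀ hDnD, one_mul] at h2
      linarith [h2]
    · intro h
      have h1 : ((n:ℝ) * (1 - βh)) * (1 - 2 * βh)
          < ((n:ℝ) * βh - 1) * (η * (1 - (2 - ϑ) * βh) - (1 - βh)) := by linarith [h]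
      have h2 : (1:ℝ) < (((n:ℝ) * βh - 1) * (η * (1 - (2 - ϑ) * βh) - (1 - βh)))
          / (((n:ℝ) * (1 - βh)) * (1 - 2 * βh)) := by
        rw [lt_div_iff₀ hDnD, one_mul]; exact h1
      calc k = k * 1 := (mul_one k).symm
        _ < _ := (mul_lt_mul_iff_right₀ hk).mpr h2
end

section
/- Let δ ∈ (0,1), p ∈ (0,1), n ≥ 1, tx_i ≥ 0 for i = 1..n. Define u* = (Σ_{j=1}^n tx_j)·Σ_{t=1}^∞ δ^t·p·(1-p)^{nt} and u' = (Σ_{j≠i} tx_j)·Σ_{t=1}^∞ δ^t·p·(1-p)^{nt} + tx_i/p. If tx_i > 0 then u' > u*, since Σ_{t=1}^∞ δ^t p(1-p)^{nt} = δp(1-p)^n/(1-δ(1-p)^n) < 1/p = E[K] for a geometric random variable K with success probability p. -/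
open Finset

/-- Transaction withholding dominates gossip in TFOM: with
S = Σ_{t=1}^∞ δ^t p(1-p)^{nt} = δp(1-p)^n/(1-δ(1-p)^n) < 1/p, the withholding
utility u' exceeds the broadcasting utility u* whenever tx_i > 0. -/
theorem withholding_dominates_gossip
    (δ p : ℝ) (n : ℕ) (tx : Fin n → ℝ) (i : Fin n)
    (hδ0 : 0 < δ) (hδ1 : δ < 1) (hp0 : 0 < p) (hp1 : p < 1)
    (hn : 1 ≤ n) (htx : ∀ j, 0 ≤ tx j) (hi : 0 < tx i) :
    (∑' t : ℕ, δ ^ (t + 1) * p * (1 - p) ^ (n * (t + 1)) =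
        δ * p * (1 - p) ^ n / (1 - δ * (1 - p) ^ n)) ∧
    (∑' t : ℕ, δ ^ (t + 1) * p * (1 - p) ^ (n * (t + 1)) < 1 / p) ∧
    ((∑ j, tx j) * ∑' t : ℕ, δ ^ (t + 1) * p * (1 - p) ^ (n * (t + 1)) <
      (∑ j ∈ univ.erase i, tx j) * (∑' t : ℕ, δ ^ (t + 1) * p * (1 - p) ^ (n * (t + 1)))
        + tx i / p) := by
  set r : ℝ := δ * (1 - p) ^ n with hr
  have h1p0 : (0:ℝ) < 1 - p := by linarith
  have hq1 : (1 - p) ^ n ≤ 1 - p := by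
    calc (1 - p) ^ n ≤ (1 - p) ^ 1 := pow_le_pow_of_le_one (le_of_lt h1p0) (by linarith) hn
    _ = 1 - p := pow_one _
  have hr0 : 0 < r := mul_pos hδ0 (pow_pos h1p0 n)
  have hrlt : r < 1 - p := by
    have : r < 1 * (1 - p) ^ n := mul_lt_mul_of_pos_right hδ1 (pow_pos h1p0 n)
    rw [one_mul] at this
    linarith
  have hr1 : r < 1 := by linarith
  have hsum : ∑' t : ℕ, δ ^ (t + 1) * p * (1 - p) ^ (n * (t + 1)) =
      δ * p * (1 - p) ^ n / (1 - δ * (1 - p) ^ n) := by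
    have hfun : ∀ t : ℕ, δ ^ (t + 1) * p * (1 - p) ^ (n * (t + 1))
        = (p * r) * r ^ t := by
      intro t
      simp [hr, pow_mul, mul_pow, pow_succ, mul_comm, mul_assoc, mul_left_comm]
    rw [tsum_congr hfun, tsum_mul_left,
        tsum_geometric_of_lt_one (le_of_lt hr0) hr1]
    field_simp [hr]
    ring
  have hS : δ * p * (1 - p) ^ n / (1 - δ * (1 - p) ^ n) < 1 / p := by
    have h1r : 0 < 1 - r := by linarith
    have : p * r / (1 - r) < 1 / p := by
      rw [div_lt_div_iff₀ h1r hp0]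
      nlinarith [mul_pos hp0 hr0]
    calc δ * p * (1 - p) ^ n / (1 - δ * (1 - p) ^ n) = p * r / (1 - r) := by
          rw [hr]; ring_nf
    _ < 1 / p := this
  refine ⟨hsum, by rw [hsum]; exact hS, ?_⟩
  rw [hsum]
  have hsplit : (∑ j, tx j) = (∑ j ∈ univ.erase i, tx j) + tx i := by
    rw [add_comm]
    exact (Finset.add_sum_erase univ tx (mem_univ i)).symm
  rw [hsplit, add_mul]
  have : tx i * (δ * p * (1 - p) ^ n / (1 - δ * (1 - p) ^ n)) < tx i / p := by
    calc tx i * (δ * p * (1 - p) ^ n / (1 - δ * (1 - p) ^ n)) < tx i * (1/p) :=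
          (mul_lt_mul_iff_right₀ hi).mpr hS
    _ = tx i / p := by ring
  linarith
end

section
/- Let φ ∈ (0,1), ρ a positive integer, n > 1 an integer, and let k* = ρ - log_φ((1+(n-1)φ^ρ)/n). Then 0 < k* < ρ, and for every real k with 0 < k < k*, the Gambler's ruin success probability satisfies (1 - φ^(ρ-k))/(1 - φ^ρ) > (n-1)/n. -/
/-- The Quick Fork depth bound k* = ρ - log_φ((1+(n-1)φ^ρ)/n) satisfies
0 < k* < ρ, and any fork depth k ∈ (0, k*) gives Gambler's ruin success
probability strictly greater than (n-1)/n. -/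
theorem quick_fork_depth_bound
    (φ : ℝ) (ρ : ℕ) (n : ℕ)
    (hφ0 : 0 < φ) (hφ1 : φ < 1) (hρ : 0 < ρ) (hn : 1 < n) :
    0 < (ρ : ℝ) - Real.log ((1 + ((n : ℝ) - 1) * φ ^ ((ρ : ℕ) : ℝ)) / n) / Real.log φ ∧
    (ρ : ℝ) - Real.log ((1 + ((n : ℝ) - 1) * φ ^ ((ρ : ℕ) : ℝ)) / n) / Real.log φ < ρ ∧
    ∀ k : ℝ, 0 < k →
      k < (ρ : ℝ) - Real.log ((1 + ((n : ℝ) - 1) * φ ^ ((ρ : ℕ) : ℝ)) / n) / Real.log φ →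
      (1 - φ ^ ((ρ : ℝ) - k)) / (1 - φ ^ ((ρ : ℕ) : ℝ)) > ((n : ℝ) - 1) / n := by
  have hn1 : (1 : ℝ) < (n : ℝ) := by exact_mod_cast hn
  have hn0 : (0 : ℝ) < (n : ℝ) := by linarith
  have hL : Real.log φ < 0 := Real.log_neg hφ0 hφ1
  have hρ0 : (0 : ℝ) < (ρ : ℝ) := by exact_mod_cast hρ
  have hp0 : 0 < φ ^ ((ρ : ℕ) : ℝ) := Real.rpow_pos_of_pos hφ0 _
  have hp1 : φ ^ ((ρ : ℕ) : ℝ) < 1 := Real.rpow_lt_one hφ0.le hφ1 hρ0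
  set A : ℝ := (1 + ((n : ℝ) - 1) * φ ^ ((ρ : ℕ) : ℝ)) / n with hA
  have hA0 : 0 < A := by
    apply div_pos _ hn0
    nlinarith
  have hA1 : A < 1 := by
    rw [hA, div_lt_one hn0]
    nlinarith
  have hAgt : φ ^ ((ρ : ℕ) : ℝ) < A := by
    rw [hA, lt_div_iff₀ hn0]
    nlinarith
  have hlogA : Real.log A < 0 := Real.log_neg hA0 hA1
  have hloggt : (ρ : ℝ) * Real.log φ < Real.log A := by
    have := Real.log_lt_log hp0 hAgt
    rwa [Real.log_rpow hφ0] at this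
  constructor
  · have : Real.log A / Real.log φ < (ρ : ℝ) := by
      rw [div_lt_iff_of_neg hL]
      linarith
    linarith
  constructor
  · have : 0 < Real.log A / Real.log φ := div_pos_of_neg_of_neg hlogA hL
    linarith
  · intro k hk hklt
    have h1 : Real.log A / Real.log φ < (ρ : ℝ) - k := by linarith
    have h2 : ((ρ : ℝ) - k) * Real.log φ < Real.log A := by
      rw [div_lt_iff_of_neg hL] at h1
      linarith
    have h3 : φ ^ ((ρ : ℝ) - k) < A := by
      rw [Real.rpow_def_of_pos hφ0]
      calc Real.exp (Real.log φ * ((ρ : ℝ) - k)) < Real.exp (Real.log A) := by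
            apply Real.exp_lt_exp.mpr; linarith [h2]
        _ = A := Real.exp_log hA0
    have hden : 0 < 1 - φ ^ ((ρ : ℕ) : ℝ) := by linarith
    rw [gt_iff_lt, div_lt_div_iff₀ hn0 hden]
    have hnA : (n : ℝ) * A = 1 + ((n : ℝ) - 1) * φ ^ ((ρ : ℕ) : ℝ) := by
      rw [hA]; field_simp
    nlinarith
end
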